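/- Let H be a finite set of hypotheses, each hypothesis h ∈ H being a function {0,1}ⁿ → {0,1}. Let f : {0,1}ⁿ → {0,1} be a target function and P a probability distribution on {0,1}ⁿ. Fix ε ∈ (0,1/2) and δ ∈ (0,1). If m ≥ (1/ε)·ln(|H|/δ), then with probability at least 1-δ over m i.i.d. samples x₁,…,x_m drawn from P, every hypothesis h ∈ H that is consistent with the samples (h(x_j) = f(x_j) for all j) satisfies Pr_{x∼P}[h(x) = f(x)] ≥ 1 - ε. -/

import Mathlib

/-!
A fixed hypothesis whose agreement probability with `f` is below `1 - ε` is consistent with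
`m` independent samples with probability at most `(1 - ε) ^ m ≤ exp (-ε m)`. A union bound over
the at most `|H|` such hypotheses bounds the failure probability by `|H| exp (-ε m)`, which is
at most `δ` as soon as `m ≥ (1/ε) log (|H|/δ)`.
-/

open MeasureTheory ENNReal

theorem mul_one_sub_pow_le_of_log_div_le {N ε δ : ℝ} {m : ℕ} (hN : 0 ≤ N)
    (hε : ε ∈ Set.Ioc (0 : ℝ) 1) (hδ : 0 < δ) (hm : (1 / ε) * Real.log (N / δ) ≤ m) :
    N * (1 - ε) ^ m ≤ δ := by
  obtain ⟨hε0, hε1⟩ := hε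
  rcases hN.eq_or_lt with rfl | hN
  · simpa using hδ.le
  have hlog : Real.log (N / δ) ≤ ε * m := by
    rwa [one_div, inv_mul_le_iff₀ hε0] at hm
  calc N * (1 - ε) ^ m ≤ N * Real.exp (-ε) ^ m := by
        have := Real.one_sub_le_exp_neg ε
        gcongr
    _ = N * Real.exp (-(ε * m)) := by rw [← Real.exp_nat_mul]; ring_nf
    _ ≤ N * Real.exp (-Real.log (N / δ)) := by gcongr
    _ = δ := by rw [Real.exp_neg, Real.exp_log (by positivity)]; field_simp

section Consistency

variable {ι α β : Type*} [Fintype ι] [MeasurableSpace α] (P : Measure α) (f : α → β)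

theorem measure_pi_setOf_forall_mem [SigmaFinite P] (s : Set α) :
    Measure.pi (fun _ : ι => P) {xs | ∀ i, xs i ∈ s} = P s ^ Fintype.card ι := by
  have hpi : {xs : ι → α | ∀ i, xs i ∈ s} = Set.univ.pi fun _ => s := by ext; simp
  rw [hpi, Measure.pi_pi, Finset.prod_const, Finset.card_univ]

theorem measure_pi_consistent_and_lt_le [SigmaFinite P] (h : α → β) (t : ℝ≥0∞) :
    Measure.pi (fun _ : ι => P)
        {xs | (∀ i, h (xs i) = f (xs i)) ∧ P {x | h x = f x} < t} ≤ t ^ Fintype.card ι := by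
  by_cases hbad : P {x | h x = f x} < t
  · calc _ ≤ Measure.pi (fun _ : ι => P) {xs | ∀ i, xs i ∈ {x | h x = f x}} :=
          measure_mono fun xs hxs => hxs.1
      _ = P {x | h x = f x} ^ Fintype.card ι := measure_pi_setOf_forall_mem P _
      _ ≤ t ^ Fintype.card ι := by gcongr
  · simp [hbad]

theorem one_sub_card_mul_pow_le_measure_pi_consistent_imp [IsProbabilityMeasure P]
    (H : Finset (α → β)) (t : ℝ≥0∞) :
    1 - H.card * t ^ Fintype.card ι ≤ Measure.pi (fun _ : ι => P)
      {xs | ∀ h ∈ H, (∀ i, h (xs i) = f (xs i)) → t ≤ P {x | h x = f x}} := by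
  set μ := Measure.pi fun _ : ι => P
  set Good := {xs : ι → α | ∀ h ∈ H, (∀ i, h (xs i) = f (xs i)) → t ≤ P {x | h x = f x}}
  set Bad := ⋃ h ∈ H, {xs : ι → α | (∀ i, h (xs i) = f (xs i)) ∧ P {x | h x = f x} < t}
  have hcompl : Goodᶜ ⊆ Bad := by
    intro xs hxs
    simp only [Good, Set.mem_compl_iff, Set.mem_ofPred_eq, not_forall, not_le] at hxs
    obtain ⟨h, hH, hcons, hlt⟩ := hxs
    exact Set.mem_biUnion hH ⟨hcons, hlt⟩
  have hBad : μ Bad ≤ H.card * t ^ Fintype.card ι := by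
    calc μ Bad ≤ ∑ h ∈ H, μ {xs | (∀ i, h (xs i) = f (xs i)) ∧ P {x | h x = f x} < t} :=
          measure_biUnion_finset_le H _
      _ ≤ ∑ _h ∈ H, t ^ Fintype.card ι :=
          Finset.sum_le_sum fun h _ => measure_pi_consistent_and_lt_le P f h t
      _ = H.card * t ^ Fintype.card ι := by rw [Finset.sum_const, nsmul_eq_mul]
  calc 1 - H.card * t ^ Fintype.card ι ≤ 1 - μ Bad := tsub_le_tsub_left hBad 1
    _ ≤ μ Good := by
      rw [tsub_le_iff_right, ← measure_univ (μ := μ), ← Set.union_compl_self Good]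
      exact (measure_union_le _ _).trans (add_le_add_right (measure_mono hcompl) _)

end Consistency

theorem stmt_4 (n m : ℕ) (H : Finset ((Fin n → Bool) → Bool))
    (f : (Fin n → Bool) → Bool) (P : Measure (Fin n → Bool))
    [IsProbabilityMeasure P] (ε δ : ℝ) (hε : ε ∈ Set.Ioo (0 : ℝ) (1 / 2))
    (hδ : δ ∈ Set.Ioo (0 : ℝ) 1)
    (hm : (1 / ε) * Real.log ((H.card : ℝ) / δ) ≤ (m : ℝ)) :
    ENNReal.ofReal (1 - δ) ≤
      (Measure.pi fun _ : Fin m => P)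
        {xs : Fin m → (Fin n → Bool) |
          ∀ h ∈ H, (∀ j : Fin m, h (xs j) = f (xs j)) →
            ENNReal.ofReal (1 - ε) ≤ P {x | h x = f x}} := by
  have hfail : (H.card : ℝ≥0∞) * ENNReal.ofReal (1 - ε) ^ m ≤ ENNReal.ofReal δ := by
    rw [← ENNReal.ofReal_pow (by linarith [hε.2]), ← ENNReal.ofReal_natCast,
      ← ENNReal.ofReal_mul (Nat.cast_nonneg _)]
    exact ENNReal.ofReal_le_ofReal <| mul_one_sub_pow_le_of_log_div_le (Nat.cast_nonneg _)
      ⟨hε.1, by linarith [hε.2]⟩ hδ.1 hm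
  calc ENNReal.ofReal (1 - δ) = 1 - ENNReal.ofReal δ := by
        rw [ENNReal.ofReal_sub 1 hδ.1.le, ENNReal.ofReal_one]
    _ ≤ 1 - H.card * ENNReal.ofReal (1 - ε) ^ m := tsub_le_tsub_left hfail 1
    _ ≤ _ := by
      simpa using one_sub_card_mul_pow_le_measure_pi_consistent_imp (ι := Fin m) P f H
        (ENNReal.ofReal (1 - ε))
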